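/- Any metabolic non-singular almost even Hermitian matrix over ℤπ represents the trivial class in the group W̃(π) of stable congruence classes; equivalently, a matrix congruent to [[0, I],[I, X]] is stably congruent to a unidiagonal matrix. -/

import Mathlib

/-- The integral group ring ℤπ. -/
abbrev GroupRing (π : Type) [Group π] := MonoidAlgebra ℤ π

/-- The involution on ℤπ induced by g ↦ g⁻¹, extended ℤ-linearly. -/
noncomputable def GRconj {π : Type} [Group π] (x : GroupRing π) : GroupRing π :=
  MonoidAlgebra.ofCoeff (Finsupp.mapDomain (fun g : π => g⁻¹) x.coeff)

/-- Entrywise involution followed by transpose: the conjugate-transpose of a matrix over ℤπ. -/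
noncomputable def ctrans {π : Type} [Group π] {m n : Type} (A : Matrix m n (GroupRing π)) :
    Matrix n m (GroupRing π) :=
  (A.map GRconj).transpose

/-- Square matrices over ℤπ of size n. -/
abbrev Mat (π : Type) [Group π] (n : ℕ) := Matrix (Fin n) (Fin n) (GroupRing π)

/-- A square matrix over ℤπ is Hermitian if conj(A)ᵗ = A. -/
def IsHermitianGR {π : Type} [Group π] {n : ℕ} (A : Mat π n) : Prop :=
  ctrans A = A

/-- A matrix over ℤπ is almost even if for every g ∈ π with g² = 1 and g ≠ 1, the coefficient
of g in every diagonal entry is even. -/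
def AlmostEven {π : Type} [Group π] {n : ℕ} (A : Mat π n) : Prop :=
  ∀ (i : Fin n) (g : π), g ^ 2 = 1 → g ≠ 1 → Even ((A i i).coeff g)

/-- Block-diagonal sum of square matrices. -/
noncomputable def bsum {π : Type} [Group π] {m n : ℕ} (A : Mat π m) (B : Mat π n) :
    Mat π (m + n) :=
  Matrix.reindex finSumFinEquiv finSumFinEquiv (Matrix.fromBlocks A 0 0 B)

/-- Congruence over ℤπ: B = P·A·conj(P)ᵗ for some invertible P. -/
def CongruentGR {π : Type} [Group π] {n : ℕ} (A B : Mat π n) : Prop :=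
  ∃ P : Mat π n, IsUnit P ∧ B = P * A * ctrans P

/-- A unidiagonal matrix: diagonal with all diagonal entries ±1. -/
def Unidiagonal {π : Type} [Group π] {n : ℕ} (S : Mat π n) : Prop :=
  ∀ i j : Fin n, (i = j → S i j = 1 ∨ S i j = -1) ∧ (i ≠ j → S i j = 0)

/-- A non-singular almost even Hermitian matrix (of some size), as an element of a sigma type. -/
def GoodMat {π : Type} [Group π] (A : Σ n : ℕ, Mat π n) : Prop :=
  IsHermitianGR A.2 ∧ AlmostEven A.2 ∧ IsUnit A.2

/-- Stable congruence: A ⊕ S₁ is congruent to B ⊕ S₂ for some unidiagonal matrices S₁, S₂. -/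
def StablyCongruent {π : Type} [Group π] (A B : Σ n : ℕ, Mat π n) : Prop :=
  ∃ (k l : ℕ) (S₁ : Mat π k) (S₂ : Mat π l) (h : A.1 + k = B.1 + l),
    Unidiagonal S₁ ∧ Unidiagonal S₂ ∧
    CongruentGR (Matrix.reindex (finCongr h) (finCongr h) (bsum A.2 S₁)) (bsum B.2 S₂)

/-- The metabolic matrix [[0, I],[I, X]] of size n + n. -/
noncomputable def metab {π : Type} [Group π] {n : ℕ} (X : Mat π n) : Mat π (n + n) :=
  Matrix.reindex finSumFinEquiv finSumFinEquiv (Matrix.fromBlocks 0 1 1 X)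

/-! Congruence preserves Hermitian almost even matrices, so `X` is Hermitian and almost even.
A Hermitian almost even element of `ℤπ` is `e + ν + star ν` with `e ∈ {0, 1}`, hence
`X = D + N + Nᴴ` with `D` diagonal with entries in `{0, 1}`, and `[[1, 0], [N, 1]]` carries
`[[0, I], [I, D]]` to `[[0, I], [I, X]]`. Finally `[[0, I], [I, D]] ⊕ I` is, up to reordering,
a block sum of the integral matrices `!![0, 1, 0; 1, d, 0; 0, 0, 1]` with `d ∈ {0, 1}`, each
congruent over `ℤ` to a diagonal matrix with entries `±1`. -/

namespace Matrix

def strictLower {m R : Type*} [LinearOrder m] [Zero R] (M : Matrix m m R) : Matrix m m R :=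
  of fun i j => if j < i then M i j else 0

lemma IsHermitian.eq_diagonal_add_strictLower_add_conjTranspose {m R : Type*} [LinearOrder m]
    [DecidableEq m] [AddMonoid R] [StarAddMonoid R] {M : Matrix m m R} (hM : M.IsHermitian) :
    M = diagonal (fun i => M i i) + M.strictLower + M.strictLowerᴴ := by
  ext i j
  rcases lt_trichotomy i j with h | rfl | h
  · simp [strictLower, h.ne, h, h.not_gt, hM.apply]
  · simp [strictLower]
  · simp [strictLower, h.ne', h, h.not_gt]

section Congruent

variable {m n o R S : Type*} [Fintype m] [DecidableEq m] [Fintype n] [DecidableEq n]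
  [Semiring R] [StarRing R]

def Congruent (A B : Matrix m m R) : Prop :=
  ∃ P : Matrix m m R, IsUnit P ∧ B = P * A * Pᴴ

namespace Congruent

variable {A B C : Matrix m m R}

lemma refl (A : Matrix m m R) : A.Congruent A :=
  ⟨1, isUnit_one, by simp⟩

lemma trans (hAB : A.Congruent B) (hBC : B.Congruent C) : A.Congruent C := by
  obtain ⟨P, hP, rfl⟩ := hAB
  obtain ⟨Q, hQ, rfl⟩ := hBC
  exact ⟨Q * P, hQ.mul hP, by simp only [conjTranspose_mul, Matrix.mul_assoc]⟩

lemma symm (h : A.Congruent B) : B.Congruent A := by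
  obtain ⟨P, ⟨u, rfl⟩, rfl⟩ := h
  refine ⟨↑u⁻¹, Units.isUnit _, ?_⟩
  have hstar : (↑u : Matrix m m R)ᴴ * (↑u⁻¹ : Matrix m m R)ᴴ = 1 := by
    rw [← conjTranspose_mul, Units.inv_mul, conjTranspose_one]
  calc A = ↑u⁻¹ * ↑u * A * ((↑u)ᴴ * (↑u⁻¹)ᴴ) := by
        rw [Units.inv_mul, hstar, Matrix.one_mul, Matrix.mul_one]
    _ = _ := by simp only [Matrix.mul_assoc]

lemma isHermitian (h : A.Congruent B) (hA : A.IsHermitian) : B.IsHermitian := by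
  obtain ⟨P, -, rfl⟩ := h
  exact isHermitian_mul_mul_conjTranspose P hA

lemma reindex (e : m ≃ n) (h : A.Congruent B) : (reindex e e A).Congruent (reindex e e B) := by
  obtain ⟨P, hP, rfl⟩ := h
  refine ⟨reindex e e P, hP.map (reindexRingEquiv R e), ?_⟩
  simp only [reindex_apply, conjTranspose_submatrix, submatrix_mul_equiv]

lemma fromBlocks {A' : Matrix m m R} {B B' : Matrix n n R} (hA : A.Congruent A')
    (hB : B.Congruent B') : (fromBlocks A 0 0 B).Congruent (fromBlocks A' 0 0 B') := by
  obtain ⟨P, ⟨u, rfl⟩, rfl⟩ := hA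
  obtain ⟨Q, ⟨v, rfl⟩, rfl⟩ := hB
  let w : (Matrix (m ⊕ n) (m ⊕ n) R)ˣ :=
    ⟨Matrix.fromBlocks u 0 0 v, Matrix.fromBlocks ↑u⁻¹ 0 0 ↑v⁻¹,
      by simp [fromBlocks_multiply], by simp [fromBlocks_multiply]⟩
  exact ⟨w, w.isUnit, by simp [w, fromBlocks_conjTranspose, fromBlocks_multiply]⟩

lemma blockDiagonal [Fintype o] [DecidableEq o] {M N : o → Matrix m m R}
    (h : ∀ i, (M i).Congruent (N i)) :
    (blockDiagonal M).Congruent (blockDiagonal N) := by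
  choose P hP hN using h
  refine ⟨Matrix.blockDiagonal P, (Pi.isUnit_iff.mpr hP).map (blockDiagonalRingHom m o R), ?_⟩
  rw [blockDiagonal_conjTranspose, ← blockDiagonal_mul, ← blockDiagonal_mul]
  exact congrArg _ (funext hN)

lemma map [Semiring S] [StarRing S] (f : R →+* S) (hf : ∀ x, f (star x) = star (f x))
    (h : A.Congruent B) : (A.map f).Congruent (B.map f) := by
  obtain ⟨P, hP, rfl⟩ := h
  exact ⟨P.map f, hP.map f.mapMatrix,
    by rw [Matrix.map_mul, Matrix.map_mul, conjTranspose_map f hf]⟩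

end Congruent

end Congruent

lemma congruent_fromBlocks_zero_one_one_add {n R : Type*} [Fintype n] [DecidableEq n] [Ring R]
    [StarRing R] (D N : Matrix n n R) :
    (fromBlocks 0 (1 : Matrix n n R) 1 D).Congruent (fromBlocks 0 1 1 (D + N + Nᴴ)) := by
  let P : (Matrix (n ⊕ n) (n ⊕ n) R)ˣ :=
    ⟨fromBlocks 1 0 N 1, fromBlocks 1 0 (-N) 1,
      by simp [fromBlocks_multiply], by simp [fromBlocks_multiply]⟩
  refine ⟨P, P.isUnit, ?_⟩
  simp only [P, fromBlocks_conjTranspose, fromBlocks_multiply]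
  simp only [Matrix.mul_zero, Matrix.mul_one, Matrix.zero_mul, Matrix.one_mul, zero_add,
    add_zero, conjTranspose_one, conjTranspose_zero]
  congr 1
  abel

-- The even form `!![0, 1; 1, 0]` is not congruent over `ℤ` to a diagonal one; adding `1` to it
-- makes it odd.
lemma congruent_metabolic_block_int (c : ℤ) (hc : c = 0 ∨ c = 1) :
    ∃ s : Fin 3 → ℤ, (∀ i, s i = 1 ∨ s i = -1) ∧
      (!![0, 1, 0; 1, c, 0; 0, 0, 1] : Matrix (Fin 3) (Fin 3) ℤ).Congruent (diagonal s) := by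
  rcases hc with rfl | rfl
  · refine ⟨![1, 1, -1], by decide, !![1, 0, 1; 0, 1, -1; 1, -1, 1], ?_, ?_⟩
    · simp [isUnit_iff_isUnit_det, det_fin_three]
    · ext i j; fin_cases i <;> fin_cases j <;> rfl
  · refine ⟨![1, -1, 1], by decide, !![0, 1, 0; 1, -1, 0; 0, 0, 1], ?_, ?_⟩
    · simp [isUnit_iff_isUnit_det, det_fin_three]
    · ext i j; fin_cases i <;> fin_cases j <;> rfl

end Matrix

def finThreeProdEquivSumSum (n : ℕ) : Fin 3 × Fin n ≃ (Fin n ⊕ Fin n) ⊕ Fin n where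
  toFun p := ![Sum.inl (Sum.inl p.2), Sum.inl (Sum.inr p.2), Sum.inr p.2] p.1
  invFun
    | Sum.inl (Sum.inl i) => (0, i)
    | Sum.inl (Sum.inr i) => (1, i)
    | Sum.inr i => (2, i)
  left_inv := by rintro ⟨a, i⟩; fin_cases a <;> rfl
  right_inv := by rintro ((i | i) | i) <;> rfl

def finThreeProdEquiv (n : ℕ) : Fin 3 × Fin n ≃ Fin (n + n + n) :=
  (finThreeProdEquivSumSum n).trans
    ((finSumFinEquiv.sumCongr (Equiv.refl _)).trans finSumFinEquiv)

namespace GroupRing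

variable {π : Type} [Group π]

open MonoidAlgebra

lemma coeff_GRconj (x : GroupRing π) (g : π) : (GRconj x).coeff g = x.coeff g⁻¹ := by
  rw [GRconj, coeff_ofCoeff]
  simpa using Finsupp.mapDomain_apply inv_injective x.coeff g⁻¹

lemma GRconj_single (g : π) (r : ℤ) : GRconj (single g r) = single g⁻¹ r :=
  congrArg ofCoeff Finsupp.mapDomain_single

lemma GRconj_zero : GRconj (0 : GroupRing π) = 0 :=
  congrArg ofCoeff Finsupp.mapDomain_zero

lemma GRconj_add (x y : GroupRing π) : GRconj (x + y) = GRconj x + GRconj y :=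
  congrArg ofCoeff Finsupp.mapDomain_add

lemma GRconj_GRconj (x : GroupRing π) : GRconj (GRconj x) = x := by
  ext g
  simp [coeff_GRconj]

lemma GRconj_mul (x y : GroupRing π) : GRconj (x * y) = GRconj y * GRconj x := by
  induction x using induction_linear with
  | zero => simp [GRconj_zero]
  | add x x' hx hx' => rw [add_mul, GRconj_add, GRconj_add, hx, hx', mul_add]
  | single g r =>
    induction y using induction_linear with
    | zero => simp [GRconj_zero]
    | add y y' hy hy' => rw [mul_add, GRconj_add, GRconj_add, hy, hy', add_mul]
    | single h s =>
      simp only [single_mul_single, GRconj_single, mul_inv_rev, mul_comm r s]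

-- With this `star`, `ctrans A` is `Aᴴ` by definition, so `CongruentGR` and `IsHermitianGR` are
-- `Matrix.Congruent` and `Matrix.IsHermitian`.
noncomputable instance : StarRing (GroupRing π) where
  star := GRconj
  star_involutive := GRconj_GRconj
  star_mul := GRconj_mul
  star_add := GRconj_add

lemma coeff_star (x : GroupRing π) (g : π) : (star x).coeff g = x.coeff g⁻¹ := coeff_GRconj x g

lemma star_single (g : π) (r : ℤ) : star (single g r) = single g⁻¹ r := GRconj_single g r

variable (π) in
def almostEvenSubgroup : AddSubgroup (GroupRing π) where
  carrier := {x | ∀ g : π, g ^ 2 = 1 → g ≠ 1 → Even (x.coeff g)}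
  add_mem' hx hy g hg hg1 := (hx g hg hg1).add (hy g hg hg1)
  zero_mem' _ _ _ := Even.zero
  neg_mem' hx g hg hg1 := (hx g hg hg1).neg

lemma add_star_mem_almostEvenSubgroup (x : GroupRing π) :
    x + star x ∈ almostEvenSubgroup π := by
  intro g hg _
  rw [coeff_add, Finsupp.add_apply, coeff_star, inv_eq_of_mul_eq_one_right (pow_two g ▸ hg)]
  exact ⟨_, rfl⟩

lemma mul_mul_star_mem_almostEvenSubgroup {ξ : GroupRing π} (hξ : star ξ = ξ)
    (hae : ξ ∈ almostEvenSubgroup π) (a : GroupRing π) :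
    a * ξ * star a ∈ almostEvenSubgroup π := by
  induction a using induction_linear with
  | zero => simp
  | add a b ha hb =>
    have hcross : star (a * ξ * star b) = b * ξ * star a := by
      rw [star_mul, star_mul, star_star, hξ, mul_assoc]
    have hexp : (a + b) * ξ * star (a + b) =
        a * ξ * star a + b * ξ * star b + (a * ξ * star b + star (a * ξ * star b)) := by
      rw [hcross, star_add]
      noncomm_ring
    rw [hexp]
    exact add_mem (add_mem ha hb) (add_star_mem_almostEvenSubgroup _)
  | single u c =>
    intro g hg hg1
    have hconj_sq : (u⁻¹ * (g * u)) ^ 2 = 1 := by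
      rw [pow_two] at hg ⊢
      calc u⁻¹ * (g * u) * (u⁻¹ * (g * u)) = u⁻¹ * (g * g) * u := by group
        _ = 1 := by rw [hg]; group
    have hconj_ne : u⁻¹ * (g * u) ≠ 1 := by
      rwa [Ne, inv_mul_eq_one, right_eq_mul]
    rw [star_single, coeff_mul_single_apply, coeff_single_mul_apply, inv_inv]
    exact ((hae _ hconj_sq hconj_ne).mul_left c).mul_right c

open Matrix

lemma almostEven_mul_mul_conjTranspose {n : ℕ} {M : Mat π n} (hM : M.IsHermitian)
    (hae : AlmostEven M) (P : Mat π n) : AlmostEven (P * M * Pᴴ) := by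
  have hdiag : ∀ i, (P * M * Pᴴ) i i = ∑ k, P i k * M k k * star (P i k) +
      ((P * M.strictLower * Pᴴ) i i + star ((P * M.strictLower * Pᴴ) i i)) := by
    intro i
    have hL : P * M.strictLowerᴴ * Pᴴ = (P * M.strictLower * Pᴴ)ᴴ := by
      simp only [conjTranspose_mul, conjTranspose_conjTranspose, Matrix.mul_assoc]
    conv_lhs => rw [hM.eq_diagonal_add_strictLower_add_conjTranspose, Matrix.mul_add,
      Matrix.add_mul, Matrix.mul_add, Matrix.add_mul, hL]
    rw [Matrix.add_apply, Matrix.add_apply, conjTranspose_apply, add_assoc, Matrix.mul_apply]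
    simp only [mul_diagonal, conjTranspose_apply]
  intro i
  rw [hdiag i]
  exact add_mem (sum_mem fun k _ => mul_mul_star_mem_almostEvenSubgroup (hM.apply k k) (hae k) _)
    (add_star_mem_almostEvenSubgroup _)

lemma exists_eq_intCast_add_add_star {ξ : GroupRing π} (hξ : star ξ = ξ)
    (hae : ξ ∈ almostEvenSubgroup π) :
    ∃ ν : GroupRing π, ξ = ((ξ.coeff 1 % 2 : ℤ) : GroupRing π) + (ν + star ν) := by
  classical
  -- `ν` takes the coefficient at `g` when `g` lies below `g⁻¹` in an auxiliary well-order, and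
  -- half of the (even) coefficient at an involution `g`.
  let _ : LinearOrder π := linearOrderOfSTO WellOrderingRel
  let f : π → ℤ := fun g =>
    if g < g⁻¹ then ξ.coeff g else if g = g⁻¹ then ξ.coeff g / 2 else 0
  have hf : ∀ g, f g ≠ 0 → g ∈ ξ.coeff.support := by
    intro g hg
    contrapose! hg
    simp [f, Finsupp.notMem_support_iff.mp hg]
  refine ⟨ofCoeff (Finsupp.onFinset _ f hf), ?_⟩
  ext g
  have hsym : ξ.coeff g⁻¹ = ξ.coeff g := by rw [← coeff_star, hξ]
  simp only [coeff_add, Finsupp.add_apply, coeff_star, intCast_def, Finsupp.onFinset_apply, f,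
    inv_inv, hsym]
  rcases lt_trichotomy g g⁻¹ with h | h | h
  · have h1 : g ≠ 1 := by rintro rfl; simp at h
    simp [h, h.ne', h.not_gt, Ne.symm h1]
  · by_cases h1 : g = 1
    · subst h1
      simp only [Int.cast_eq, coeff_single, Finsupp.single_eq_same, inv_one, lt_self_iff_false,
        ↓reduceIte]
      omega
    · obtain ⟨r, hr⟩ := hae g (by rw [pow_two]; nth_rw 2 [h]; simp) h1
      simp only [← h, hr, Int.cast_eq, coeff_single, Finsupp.single_eq_of_ne' (Ne.symm h1),
        lt_self_iff_false, ↓reduceIte, zero_add]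
      omega
  · have h1 : g ≠ 1 := by rintro rfl; simp at h
    simp [h, h.ne', h.not_gt, Ne.symm h1]

lemma almostEven_of_congruent {n : ℕ} {A B : Mat π n} (h : A.Congruent B) (hA : A.IsHermitian)
    (hae : AlmostEven A) : AlmostEven B := by
  obtain ⟨P, -, rfl⟩ := h
  exact almostEven_mul_mul_conjTranspose hA hae P

lemma isHermitian_of_metab {n : ℕ} {X : Mat π n} (h : (metab X).IsHermitian) :
    X.IsHermitian := by
  have : (fromBlocks 0 (1 : Mat π n) 1 X).IsHermitian := by
    simpa [metab] using h.submatrix finSumFinEquiv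
  exact (isHermitian_fromBlocks_iff.mp this).2.2.2

lemma almostEven_of_metab {n : ℕ} {X : Mat π n} (h : AlmostEven (metab X)) : AlmostEven X :=
  fun i => by simpa [metab, -finSumFinEquiv_apply_right] using h (finSumFinEquiv (Sum.inr i))

lemma exists_eq_diagonal_intCast_add_add_conjTranspose {n : ℕ} {X : Mat π n}
    (hX : X.IsHermitian) (hae : AlmostEven X) :
    ∃ (c : Fin n → ℤ) (N : Mat π n), (∀ i, c i = 0 ∨ c i = 1) ∧
      X = diagonal (fun i => (c i : GroupRing π)) + N + Nᴴ := by
  choose ν hν using fun i => exists_eq_intCast_add_add_star (hX.apply i i) (hae i)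
  refine ⟨fun i => (X i i).coeff 1 % 2, X.strictLower + diagonal ν,
    fun i => Int.emod_two_eq_zero_or_one _, ?_⟩
  have hdiag : diagonal (fun i => X i i) =
      diagonal (fun i => (((X i i).coeff 1 % 2 : ℤ) : GroupRing π)) + diagonal ν +
        (diagonal ν)ᴴ := by
    rw [diagonal_conjTranspose, diagonal_add, diagonal_add]
    exact congrArg diagonal (funext fun i => (hν i).trans (add_assoc _ _ _).symm)
  conv_lhs => rw [hX.eq_diagonal_add_strictLower_add_conjTranspose, hdiag]
  rw [conjTranspose_add]
  abel

lemma unidiagonal_diagonal {n : ℕ} {d : Fin n → GroupRing π}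
    (hd : ∀ i, d i = 1 ∨ d i = -1) : Unidiagonal (diagonal d) := fun i j =>
  ⟨by rintro rfl; simpa using hd i, fun h => diagonal_apply_ne _ h⟩

lemma unidiagonal_one {n : ℕ} : Unidiagonal (1 : Mat π n) := by
  rw [← diagonal_one]
  exact unidiagonal_diagonal fun _ => Or.inl rfl

lemma bsum_fin_zero {m : ℕ} (A : Mat π m) (B : Mat π 0) : bsum A B = A := by
  refine Matrix.ext fun i j => ?_
  change fromBlocks A 0 0 B (finSumFinEquiv.symm (Fin.castAdd 0 i))
    (finSumFinEquiv.symm (Fin.castAdd 0 j)) = A i j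
  rw [finSumFinEquiv_symm_apply_castAdd, finSumFinEquiv_symm_apply_castAdd, fromBlocks_apply₁₁]

lemma stablyCongruent_of_congruent_bsum {m k : ℕ} {A : Mat π m} {S : Mat π k}
    (hS : Unidiagonal S) {U : Mat π (m + k)} (h : (bsum A S).Congruent U) :
    StablyCongruent ⟨m, A⟩ ⟨m + k, U⟩ :=
  ⟨k, 0, S, 1, rfl, hS, fun i => i.elim0, by rw [bsum_fin_zero]; exact h⟩

lemma _root_.Matrix.Congruent.bsum {m k : ℕ} {A A' : Mat π m} {B B' : Mat π k}
    (hA : A.Congruent A') (hB : B.Congruent B') : (bsum A B).Congruent (bsum A' B') :=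
  (hA.fromBlocks hB).reindex finSumFinEquiv

lemma congruent_metab_add {n : ℕ} (D N : Mat π n) : (metab D).Congruent (metab (D + N + Nᴴ)) :=
  (congruent_fromBlocks_zero_one_one_add D N).reindex finSumFinEquiv

-- Grouping the rows `i`, `n + i`, `2n + i` makes `[[0, I], [I, D]] ⊕ I` block diagonal.
lemma bsum_metab_diagonal_intCast {n : ℕ} (c : Fin n → ℤ) :
    bsum (metab (diagonal fun i => (c i : GroupRing π))) 1 =
      (reindex (finThreeProdEquiv n) (finThreeProdEquiv n)
        (blockDiagonal fun i => !![0, 1, 0; 1, c i, 0; 0, 0, 1])).map Int.cast := by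
  refine Matrix.ext fun x y => ?_
  obtain ⟨⟨a, i⟩, rfl⟩ := (finThreeProdEquiv n).surjective x
  obtain ⟨⟨b, j⟩, rfl⟩ := (finThreeProdEquiv n).surjective y
  fin_cases a <;> fin_cases b <;>
    simp [bsum, metab, finThreeProdEquiv, finThreeProdEquivSumSum, blockDiagonal_apply,
      one_apply, diagonal_apply, -finSumFinEquiv_apply_left, -finSumFinEquiv_apply_right]

lemma exists_congruent_bsum_metab_diagonal_intCast {n : ℕ} (c : Fin n → ℤ)
    (hc : ∀ i, c i = 0 ∨ c i = 1) :
    ∃ u : Fin (n + n + n) → GroupRing π, (∀ x, u x = 1 ∨ u x = -1) ∧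
      (bsum (metab (diagonal fun i => (c i : GroupRing π))) 1).Congruent (diagonal u) := by
  choose s hs hK using fun i => congruent_metabolic_block_int (c i) (hc i)
  let e := finThreeProdEquiv n
  refine ⟨fun x => s (e.symm x).2 (e.symm x).1, fun x => ?_, ?_⟩
  · rcases hs (e.symm x).2 (e.symm x).1 with h | h <;> simp [h]
  · rw [bsum_metab_diagonal_intCast]
    simpa [blockDiagonal_diagonal, submatrix_diagonal_equiv, diagonal_map] using
      ((Congruent.blockDiagonal hK).reindex e).map (Int.castRingHom (GroupRing π))
        (fun x => (star_intCast x).symm)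

end GroupRing

open GroupRing Matrix

/-- A metabolic non-singular almost even Hermitian matrix is stably congruent to a unidiagonal
matrix, i.e. represents the trivial class in the group of stable congruence classes. -/
theorem metabolic_is_trivial (π : Type) [Group π] (n : ℕ)
    (A : Mat π (n + n)) (hA : GoodMat ⟨n + n, A⟩)
    (X : Mat π n) (hmet : CongruentGR A (metab X)) :
    ∃ (k : ℕ) (S : Mat π k), Unidiagonal S ∧ StablyCongruent ⟨n + n, A⟩ ⟨k, S⟩ := by
  have hAX : A.Congruent (metab X) := hmet
  have hX : X.IsHermitian := isHermitian_of_metab (hAX.isHermitian hA.1)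
  have hXe : AlmostEven X := almostEven_of_metab (almostEven_of_congruent hAX hA.1 hA.2.1)
  obtain ⟨c, N, hc, rfl⟩ := exists_eq_diagonal_intCast_add_add_conjTranspose hX hXe
  obtain ⟨u, hu, hcong⟩ := exists_congruent_bsum_metab_diagonal_intCast (π := π) c hc
  refine ⟨n + n + n, diagonal u, unidiagonal_diagonal hu,
    stablyCongruent_of_congruent_bsum unidiagonal_one ?_⟩
  exact ((hAX.trans (congruent_metab_add _ N).symm).bsum (.refl 1)).trans hcong
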